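/- If for each element ω the per-element release mechanism R_ω (release iff c_ω + Z_ω > τ, with Z_ω ∼ DLap_τ(ε) independent across ω) satisfies: (a) Pr-ratio bound e^{-ε} ≤ Pr[release at count c+1]/Pr[release at count c] when both counts are ≥ 1 possible, interpreted as (ε, 0)-DP indistinguishability for counts differing by 1 when c ≥ 1, and (b) release probability at count 1 is ≤ δ and at count 0 is 0, then the joint mechanism over all elements is (ε, δ)-DP with respect to add/remove-one-record adjacency where each record contains at most one element. -/

import Mathlib

open scoped ENNReal

/-- Two multisets are adjacent if one is obtained from the other by adding or
removing one record. -/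
def Adjacent {α : Type*} (x x' : Multiset α) : Prop :=
  (∃ a, x' = a ::ₘ x) ∨ (∃ a, x = a ::ₘ x')

/-- Probability that the (random) output of `μ` lies in `E`. -/
noncomputable def Pr {Y : Type*} (μ : PMF Y) (E : Set Y) : ℝ≥0∞ := μ.toOuterMeasure E

/-- `(ε, δ)`-differential privacy for a mechanism on multiset datasets. -/
def IsDP {α Y : Type*} (M : Multiset α → PMF Y) (ε δ : ℝ) : Prop :=
  ∀ x x' : Multiset α, Adjacent x x' → ∀ E : Set Y,
    Pr (M x) E ≤ ENNReal.ofReal (Real.exp ε) * Pr (M x') E + ENNReal.ofReal δ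


/-- The candidate elements of a dataset: the union of all its records. -/
def candidates {Ω : Type*} [DecidableEq Ω] (D : Multiset (Finset Ω)) : Finset Ω :=
  D.toFinset.sup id

/-- The count `c_ω` of an element: the number of records containing it. -/
def elemCount {Ω : Type*} [DecidableEq Ω] (D : Multiset (Finset Ω)) (ω : Ω) : ℕ :=
  (D.filter fun h => ω ∈ h).card

/-! Adding a record `{a}` changes only the count of `a`, so the mass function of the joint
release, a product of independent per-element release probabilities, changes in the single
factor of `a`. If `a` already was a candidate, with count `c ≥ 1`, that factor moves from `R c`
to `R (c + 1)`, which costs a factor `e^ε` pointwise. If `a` is new, the new release is the old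
one with an independent coordinate `a` adjoined that is released with probability
`R 1 true ≤ δ`, so the two laws differ on any event by at most that probability. An empty
record changes nothing. -/

section ProductMass

variable {Ω : Type*} [DecidableEq Ω]

noncomputable def prodMass (p : Ω → PMF Bool) (C S : Finset Ω) : ℝ≥0∞ :=
  (∏ ω ∈ S, p ω true) * ∏ ω ∈ C \ S, p ω false

theorem prodMass_eq_mul_erase (p : Ω → PMF Bool) {C : Finset Ω} {a : Ω} (ha : a ∈ C)
    (S : Finset Ω) :
    prodMass p C S = p a (decide (a ∈ S)) * prodMass p (C.erase a) (S.erase a) := by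
  by_cases haS : a ∈ S
  · have hsdiff : C.erase a \ S.erase a = C \ S := by
      ext ω; by_cases hω : ω = a <;> simp [hω, haS]
    rw [prodMass, prodMass, hsdiff, ← Finset.mul_prod_erase S _ haS, decide_eq_true haS, mul_assoc]
  · have hsdiff : C.erase a \ S = (C \ S).erase a := by
      ext ω; by_cases hω : ω = a <;> simp [hω, haS]
    rw [prodMass, prodMass, Finset.erase_eq_of_notMem haS, hsdiff,
      ← Finset.mul_prod_erase (C \ S) _ (Finset.mem_sdiff.mpr ⟨ha, haS⟩), decide_eq_false haS]
    ring

theorem prodMass_update_of_notMem (p : Ω → PMF Bool) (q : PMF Bool) {C S : Finset Ω} {a : Ω}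
    (haC : a ∉ C) (haS : a ∉ S) : prodMass (Function.update p a q) C S = prodMass p C S := by
  have hne : ∀ T : Finset Ω, a ∉ T → ∀ b, ∏ ω ∈ T, Function.update p a q ω b = ∏ ω ∈ T, p ω b :=
    fun T haT b => Finset.prod_congr rfl fun ω hω =>
      by rw [Function.update_of_ne (ne_of_mem_of_not_mem hω haT)]
  rw [prodMass, prodMass, hne S haS, hne (C \ S) (fun h => haC (Finset.mem_sdiff.mp h).1)]

theorem prodMass_update (p : Ω → PMF Bool) (q : PMF Bool) {C : Finset Ω} {a : Ω} (ha : a ∈ C)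
    (S : Finset Ω) :
    prodMass (Function.update p a q) C S =
      q (decide (a ∈ S)) * prodMass p (C.erase a) (S.erase a) := by
  rw [prodMass_eq_mul_erase _ ha, Function.update_self,
    prodMass_update_of_notMem _ _ (Finset.notMem_erase a C) (Finset.notMem_erase a S)]

end ProductMass

theorem Pr_univ {Y : Type*} (μ : PMF Y) : Pr μ Set.univ = 1 :=
  (PMF.toOuterMeasure_apply_eq_one_iff _ _).mpr (Set.subset_univ _)

theorem Pr_le_one {Y : Type*} (μ : PMF Y) (E : Set Y) : Pr μ E ≤ 1 :=
  (MeasureTheory.measure_mono (Set.subset_univ E)).trans_eq (Pr_univ μ)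

section SubsetLaws

open Classical

variable {Ω : Type*}

def SupportedOnPowerset (μ : PMF (Set Ω)) (C : Finset Ω) : Prop :=
  ∀ T : Set Ω, (¬ ∃ S : Finset Ω, ↑S = T ∧ S ⊆ C) → μ T = 0

variable {μ ν : PMF (Set Ω)} {C : Finset Ω}

theorem SupportedOnPowerset.Pr_eq_sum (hμ : SupportedOnPowerset μ C) (E : Set (Set Ω)) :
    Pr μ E = ∑ S ∈ C.powerset with ↑S ∈ E, μ ↑S := by
  rw [Pr, PMF.toOuterMeasure_apply, tsum_eq_sum (s := C.powerset.image (↑)),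
    Finset.sum_image fun S _ S' _ h => Finset.coe_injective h, Finset.sum_filter]
  · rfl
  · intro T hT
    exact Set.indicator_apply_eq_zero.mpr fun _ =>
      hμ T fun ⟨S, hST, hS⟩ => hT (Finset.mem_image.mpr ⟨S, Finset.mem_powerset.mpr hS, hST⟩)

theorem SupportedOnPowerset.sum_eq_one (hμ : SupportedOnPowerset μ C) :
    ∑ S ∈ C.powerset, μ ↑S = 1 := by
  have h := hμ.Pr_eq_sum Set.univ
  simp only [Set.mem_univ, Finset.filter_true] at h
  rw [← h, Pr_univ]

theorem SupportedOnPowerset.Pr_le_mul (hμ : SupportedOnPowerset μ C) (hν : SupportedOnPowerset ν C)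
    {k : ℝ≥0∞} (hle : ∀ S ⊆ C, μ ↑S ≤ k * ν ↑S) (E : Set (Set Ω)) : Pr μ E ≤ k * Pr ν E := by
  rw [hμ.Pr_eq_sum, hν.Pr_eq_sum, Finset.mul_sum]
  exact Finset.sum_le_sum fun S hS =>
    hle S (Finset.mem_powerset.mp (Finset.mem_filter.mp hS).1)

end SubsetLaws

section FreshCoordinate

open Classical

variable {Ω : Type*} [DecidableEq Ω] {μ ν : PMF (Set Ω)} {C : Finset Ω} {a : Ω}

theorem SupportedOnPowerset.Pr_insert_le_add (hμ : SupportedOnPowerset μ (insert a C))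
    (hν : SupportedOnPowerset ν C) (ha : a ∉ C) (q : PMF Bool)
    (hq : ∀ S ⊆ C, μ ↑S = q false * ν ↑S ∧ μ ↑(insert a S) = q true * ν ↑S)
    (E : Set (Set Ω)) :
    Pr μ E ≤ Pr ν E + q true ∧ Pr ν E ≤ Pr μ E + q true := by
  have hsplit : Pr μ E = q false * Pr ν E +
      ∑ S ∈ C.powerset, if ↑(insert a S) ∈ E then μ ↑(insert a S) else 0 := by
    rw [hμ.Pr_eq_sum, hν.Pr_eq_sum, Finset.sum_filter, Finset.sum_filter,
      Finset.sum_powerset_insert ha, Finset.mul_sum]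
    congr 1
    refine Finset.sum_congr rfl fun S hS => ?_
    rw [(hq S (Finset.mem_powerset.mp hS)).1, mul_ite, mul_zero]
  have hnew : (∑ S ∈ C.powerset, if ↑(insert a S) ∈ E then μ ↑(insert a S) else 0) ≤ q true :=
    calc _ ≤ ∑ S ∈ C.powerset, q true * ν ↑S :=
          Finset.sum_le_sum fun S hS => by
            rw [← (hq S (Finset.mem_powerset.mp hS)).2]
            split_ifs <;> simp
      _ = q true := by rw [← Finset.mul_sum, hν.sum_eq_one, mul_one]
  have hq1 : q false + q true = 1 := by rw [← tsum_bool, PMF.tsum_coe]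
  constructor
  · calc Pr μ E ≤ 1 * Pr ν E + q true := by
          rw [hsplit]
          exact add_le_add (mul_le_mul_left (PMF.coe_le_one _ _) _) hnew
      _ = Pr ν E + q true := by rw [one_mul]
  · calc Pr ν E = q false * Pr ν E + q true * Pr ν E := by rw [← add_mul, hq1, one_mul]
      _ ≤ Pr μ E + q true := by
          rw [hsplit]
          exact add_le_add le_self_add (mul_le_of_le_one_right' (Pr_le_one ν E))

end FreshCoordinate

section Counts

variable {Ω : Type*} [DecidableEq Ω]

theorem candidates_cons (h : Finset Ω) (D : Multiset (Finset Ω)) :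
    candidates (h ::ₘ D) = h ∪ candidates D := by
  simp [candidates, Finset.sup_insert, Finset.sup_eq_union]

theorem candidates_singleton_cons (a : Ω) (D : Multiset (Finset Ω)) :
    candidates ({a} ::ₘ D) = insert a (candidates D) := by
  rw [candidates_cons, Finset.insert_eq]

theorem elemCount_cons (h : Finset Ω) (D : Multiset (Finset Ω)) (ω : Ω) :
    elemCount (h ::ₘ D) ω = elemCount D ω + if ω ∈ h then 1 else 0 := by
  unfold elemCount
  split_ifs with hω <;> simp [hω, add_comm]

theorem mem_candidates_iff (D : Multiset (Finset Ω)) (ω : Ω) :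
    ω ∈ candidates D ↔ elemCount D ω ≠ 0 := by
  simp [candidates, elemCount, Multiset.filter_eq_nil, Finset.mem_sup]

theorem elemCount_singleton_cons (a : Ω) (D : Multiset (Finset Ω)) :
    elemCount ({a} ::ₘ D) = Function.update (elemCount D) a (elemCount D a + 1) := by
  ext ω
  rcases eq_or_ne ω a with rfl | hω
  · simp [elemCount_cons]
  · simp [elemCount_cons, hω]

end Counts

section JointRelease

variable {Ω : Type*} [DecidableEq Ω] {R : ℕ → PMF Bool} {M : Multiset (Finset Ω) → PMF (Set Ω)}

structure IsJointRelease (R : ℕ → PMF Bool) (M : Multiset (Finset Ω) → PMF (Set Ω)) : Prop where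
  mass_eq : ∀ (D : Multiset (Finset Ω)) (S : Finset Ω), S ⊆ candidates D →
    M D ↑S = prodMass (fun ω => R (elemCount D ω)) (candidates D) S
  supported : ∀ D, SupportedOnPowerset (M D) (candidates D)

theorem IsJointRelease.empty_cons (hM : IsJointRelease R M) (D : Multiset (Finset Ω)) :
    M (∅ ::ₘ D) = M D := by
  have hC : candidates (∅ ::ₘ D) = candidates D := by simp [candidates_cons]
  have hc : elemCount (∅ ::ₘ D) = elemCount D := funext fun ω => by simp [elemCount_cons]
  ext T
  by_cases hT : ∃ S : Finset Ω, ↑S = T ∧ S ⊆ candidates D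
  · obtain ⟨S, rfl, hS⟩ := hT
    rw [hM.mass_eq _ S (hC ▸ hS), hM.mass_eq _ S hS, hC, hc]
  · rw [hM.supported _ T (hC ▸ hT), hM.supported D T hT]

theorem IsJointRelease.mass_singleton_cons (hM : IsJointRelease R M) (a : Ω)
    (D : Multiset (Finset Ω)) {S : Finset Ω} (hS : S ⊆ insert a (candidates D)) :
    M ({a} ::ₘ D) ↑S = prodMass (Function.update (fun ω => R (elemCount D ω)) a
      (R (elemCount D a + 1))) (insert a (candidates D)) S := by
  rw [hM.mass_eq _ S (candidates_singleton_cons a D ▸ hS), candidates_singleton_cons,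
    elemCount_singleton_cons]
  exact congrArg (prodMass · _ S) (Function.comp_update _ _ _ _)

theorem IsJointRelease.Pr_singleton_cons_le_of_mem (hM : IsJointRelease R M)
    {D : Multiset (Finset Ω)} {a : Ω} (ha : a ∈ candidates D) {k : ℝ≥0∞}
    (hR : ∀ b, R (elemCount D a) b ≤ k * R (elemCount D a + 1) b ∧
      R (elemCount D a + 1) b ≤ k * R (elemCount D a) b) (E : Set (Set Ω)) :
    Pr (M ({a} ::ₘ D)) E ≤ k * Pr (M D) E ∧ Pr (M D) E ≤ k * Pr (M ({a} ::ₘ D)) E := by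
  have hC : insert a (candidates D) = candidates D := Finset.insert_eq_of_mem ha
  have hμ : SupportedOnPowerset (M ({a} ::ₘ D)) (candidates D) :=
    hC ▸ candidates_singleton_cons a D ▸ hM.supported _
  set w := fun S : Finset Ω =>
    prodMass (fun ω => R (elemCount D ω)) ((candidates D).erase a) (S.erase a)
  have hmass : ∀ S ⊆ candidates D,
      M ({a} ::ₘ D) ↑S = R (elemCount D a + 1) (decide (a ∈ S)) * w S ∧
      M D ↑S = R (elemCount D a) (decide (a ∈ S)) * w S := fun S hS =>
    ⟨by rw [hM.mass_singleton_cons a D (hS.trans (Finset.subset_insert a _)), hC,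
      prodMass_update _ _ ha],
     by rw [hM.mass_eq D S hS, prodMass_eq_mul_erase _ ha]⟩
  constructor
  · refine hμ.Pr_le_mul (hM.supported D) (fun S hS => ?_) E
    rw [(hmass S hS).1, (hmass S hS).2, ← mul_assoc]
    exact mul_le_mul_left (hR _).2 _
  · refine (hM.supported D).Pr_le_mul hμ (fun S hS => ?_) E
    rw [(hmass S hS).1, (hmass S hS).2, ← mul_assoc]
    exact mul_le_mul_left (hR _).1 _

theorem IsJointRelease.Pr_singleton_cons_of_notMem (hM : IsJointRelease R M)
    {D : Multiset (Finset Ω)} {a : Ω} (ha : a ∉ candidates D) (E : Set (Set Ω)) :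
    Pr (M ({a} ::ₘ D)) E ≤ Pr (M D) E + R 1 true ∧
      Pr (M D) E ≤ Pr (M ({a} ::ₘ D)) E + R 1 true := by
  have hc : elemCount D a = 0 := not_not.mp ((mem_candidates_iff D a).not.mp ha)
  have hμ := candidates_singleton_cons a D ▸ hM.supported ({a} ::ₘ D)
  refine hμ.Pr_insert_le_add (hM.supported D) ha (R 1) (fun S hS => ?_) E
  have haS : a ∉ S := fun h => ha (hS h)
  rw [hM.mass_singleton_cons a D (hS.trans (Finset.subset_insert a _)),
    hM.mass_singleton_cons a D (Finset.insert_subset_insert a hS),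
    prodMass_update _ _ (Finset.mem_insert_self a _),
    prodMass_update _ _ (Finset.mem_insert_self a _),
    Finset.erase_insert ha, Finset.erase_insert haS, Finset.erase_eq_of_notMem haS, hc,
    hM.mass_eq D S hS]
  simp [haS]

theorem IsJointRelease.Pr_cons_le (hM : IsJointRelease R M) {k d : ℝ≥0∞} (hk : 1 ≤ k)
    (hratio : ∀ c, 1 ≤ c → ∀ b, R c b ≤ k * R (c + 1) b ∧ R (c + 1) b ≤ k * R c b)
    (hone : R 1 true ≤ d) (D : Multiset (Finset Ω)) {h : Finset Ω} (hh : h.card ≤ 1)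
    (E : Set (Set Ω)) :
    Pr (M (h ::ₘ D)) E ≤ k * Pr (M D) E + d ∧ Pr (M D) E ≤ k * Pr (M (h ::ₘ D)) E + d := by
  have hgrow : ∀ u, u ≤ k * u := fun u => le_mul_of_one_le_left' hk
  rcases Nat.le_one_iff_eq_zero_or_eq_one.mp hh with h0 | h1
  · rw [Finset.card_eq_zero.mp h0, hM.empty_cons]
    exact ⟨(hgrow _).trans le_self_add, (hgrow _).trans le_self_add⟩
  obtain ⟨a, rfl⟩ := Finset.card_eq_one.mp h1
  by_cases ha : a ∈ candidates D
  · have hc : 1 ≤ elemCount D a := Nat.one_le_iff_ne_zero.mpr ((mem_candidates_iff D a).mp ha)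
    obtain ⟨hle, hge⟩ := hM.Pr_singleton_cons_le_of_mem ha (hratio _ hc) E
    exact ⟨hle.trans le_self_add, hge.trans le_self_add⟩
  · obtain ⟨hle, hge⟩ := hM.Pr_singleton_cons_of_notMem ha E
    exact ⟨hle.trans (add_le_add (hgrow _) hone), hge.trans (add_le_add (hgrow _) hone)⟩

end JointRelease

theorem pps_reduction_to_single_element_general {Ω : Type*} [DecidableEq Ω]
    (ε δ : ℝ) (hε : 0 < ε)
    (R : ℕ → PMF Bool)
    (hratio : ∀ c : ℕ, 1 ≤ c → ∀ E : Set Bool,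
      Pr (R c) E ≤ ENNReal.ofReal (Real.exp ε) * Pr (R (c + 1)) E ∧
        Pr (R (c + 1)) E ≤ ENNReal.ofReal (Real.exp ε) * Pr (R c) E)
    (hone : (R 1) true ≤ ENNReal.ofReal δ)
    (M : Multiset (Finset Ω) → PMF (Set Ω))
    (hmass : ∀ (D : Multiset (Finset Ω)) (S : Finset Ω), S ⊆ candidates D →
      M D ↑S =
        (∏ ω ∈ S, (R (elemCount D ω)) true) *
          ∏ ω ∈ candidates D \ S, (R (elemCount D ω)) false)
    (hnull : ∀ (D : Multiset (Finset Ω)) (T : Set Ω),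
      (¬ ∃ S : Finset Ω, ↑S = T ∧ S ⊆ candidates D) → M D T = 0) :
    ∀ x x' : Multiset (Finset Ω),
      (∀ h ∈ x, h.card ≤ 1) → (∀ h ∈ x', h.card ≤ 1) → Adjacent x x' →
      ∀ E : Set (Set Ω),
        Pr (M x) E ≤ ENNReal.ofReal (Real.exp ε) * Pr (M x') E + ENNReal.ofReal δ := by
  intro x x' hx hx' hadj E
  have hM : IsJointRelease R M := ⟨hmass, hnull⟩
  have hk : 1 ≤ ENNReal.ofReal (Real.exp ε) := ENNReal.one_le_ofReal.mpr (Real.one_le_exp hε.le)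
  have hratio_pt : ∀ c, 1 ≤ c → ∀ b, R c b ≤ ENNReal.ofReal (Real.exp ε) * R (c + 1) b ∧
      R (c + 1) b ≤ ENNReal.ofReal (Real.exp ε) * R c b := fun c hc b => by
    simpa only [Pr, PMF.toOuterMeasure_apply_singleton] using hratio c hc {b}
  rcases hadj with ⟨h, rfl⟩ | ⟨h, rfl⟩
  · exact (hM.Pr_cons_le hk hratio_pt hone x (hx' h (Multiset.mem_cons_self h x)) E).2
  · exact (hM.Pr_cons_le hk hratio_pt hone x' (hx h (Multiset.mem_cons_self h x')) E).1

/-- Reduction of private partition selection to per-element guarantees: let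
`R c : PMF Bool` be the release decision for an element with count `c`
(`true` = release).  If (a) for all `c ≥ 1` the decisions at counts `c` and
`c + 1` are `(ε, 0)`-indistinguishable, and (b) the release probability at count
`1` is at most `δ` and at count `0` is `0`, then the joint mechanism that
releases each candidate element independently according to its count is
`(ε, δ)`-DP on datasets whose records contain at most one element. -/
theorem pps_reduction_to_single_element {Ω : Type*} [DecidableEq Ω]
    (ε δ : ℝ) (hε : 0 < ε) (hδ : 0 ≤ δ)
    (R : ℕ → PMF Bool)
    (hratio : ∀ c : ℕ, 1 ≤ c → ∀ E : Set Bool,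
      Pr (R c) E ≤ ENNReal.ofReal (Real.exp ε) * Pr (R (c + 1)) E ∧
        Pr (R (c + 1)) E ≤ ENNReal.ofReal (Real.exp ε) * Pr (R c) E)
    (hone : (R 1) true ≤ ENNReal.ofReal δ)
    (hzero : (R 0) true = 0)
    (M : Multiset (Finset Ω) → PMF (Set Ω))
    (hmass : ∀ (D : Multiset (Finset Ω)) (S : Finset Ω), S ⊆ candidates D →
      M D ↑S =
        (∏ ω ∈ S, (R (elemCount D ω)) true) *
          ∏ ω ∈ candidates D \ S, (R (elemCount D ω)) false)
    (hnull : ∀ (D : Multiset (Finset Ω)) (T : Set Ω),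
      (¬ ∃ S : Finset Ω, ↑S = T ∧ S ⊆ candidates D) → M D T = 0) :
    ∀ x x' : Multiset (Finset Ω),
      (∀ h ∈ x, h.card ≤ 1) → (∀ h ∈ x', h.card ≤ 1) → Adjacent x x' →
      ∀ E : Set (Set Ω),
        Pr (M x) E ≤ ENNReal.ofReal (Real.exp ε) * Pr (M x') E + ENNReal.ofReal δ :=
  pps_reduction_to_single_element_general ε δ hε R hratio hone M hmass hnull
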